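/- Let A be an n×n real symmetric positive semidefinite matrix with eigenvalues λ₁ ≥ ⋯ ≥ λ_n, eigenvectors v₁,…,v_n, and let μ ≥ 0 with λ_n + μ > 0. Fix 1 ≤ ℓ < n, let V_ℓ = [v₁ … v_ℓ] and Λ_ℓ = diag(λ₁,…,λ_ℓ), and define the optimal preconditioner P⋆ = (λ_{ℓ+1}+μ)⁻¹ V_ℓ(Λ_ℓ + μI)V_ℓᵀ + (I − V_ℓ V_ℓᵀ). Then κ₂(P⋆^{-1/2}(A + μI)P⋆^{-1/2}) = (λ_{ℓ+1} + μ)/(λ_n + μ). -/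

import Mathlib

open Matrix MeasureTheory ProbabilityTheory
open scoped Classical

/-- Moore–Penrose pseudoinverse (characterized by the four Penrose conditions). -/
noncomputable def pinv {m n : ℕ} (A : Matrix (Fin m) (Fin n) ℝ) : Matrix (Fin n) (Fin m) ℝ :=
  if h : ∃ B : Matrix (Fin n) (Fin m) ℝ,
      A * B * A = A ∧ B * A * B = B ∧ (A * B)ᵀ = A * B ∧ (B * A)ᵀ = B * A
  then h.choose else 0

/-- Nyström approximation of `A` with respect to the test matrix `X`. -/
noncomputable def nystrom {n l : ℕ} (A : Matrix (Fin n) (Fin n) ℝ)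
    (X : Matrix (Fin n) (Fin l) ℝ) : Matrix (Fin n) (Fin n) ℝ :=
  A * X * pinv (Xᵀ * A * X) * (A * X)ᵀ

/-- Spectral (ℓ² operator) norm of a matrix. -/
noncomputable def specNorm {m n : ℕ} (M : Matrix (Fin m) (Fin n) ℝ) : ℝ :=
  ‖LinearMap.toContinuousLinearMap (Matrix.toEuclideanLin M)‖

/-- Frobenius norm of a matrix. -/
noncomputable def frobNorm {m n : ℕ} (M : Matrix (Fin m) (Fin n) ℝ) : ℝ :=
  Real.sqrt (∑ i, ∑ j, (M i j) ^ 2)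

/-- Euclidean norm of a vector. -/
noncomputable def euclNorm {n : ℕ} (x : Fin n → ℝ) : ℝ :=
  Real.sqrt (∑ i, (x i) ^ 2)

/-- Law of an `n × l` random matrix with independent standard normal entries. -/
noncomputable def gaussianEnsemble (n l : ℕ) : Measure (Fin n → Fin l → ℝ) :=
  Measure.pi fun _ => Measure.pi fun _ => gaussianReal 0 1

/-- The psd square root of a psd matrix (junk value `0` otherwise). -/
noncomputable def matSqrt {n : ℕ} (M : Matrix (Fin n) (Fin n) ℝ) : Matrix (Fin n) (Fin n) ℝ :=
  if hM : M.PosSemidef then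
    hM.1.eigenvectorUnitary.1 * diagonal ((↑) ∘ (√·) ∘ hM.1.eigenvalues) *
      (star hM.1.eigenvectorUnitary : Matrix (Fin n) (Fin n) ℝ)
  else 0

/-- ℓ² condition number of a symmetric matrix: ratio of the largest to the smallest
eigenvalue (junk value `0` for non-symmetric matrices). -/
noncomputable def kappa {n : ℕ} (M : Matrix (Fin n) (Fin n) ℝ) : ℝ :=
  if hM : M.IsHermitian then (⨆ i, hM.eigenvalues i) / (⨅ i, hM.eigenvalues i) else 0

private lemma submatrix_diag_conj {n l : ℕ} (hln : l ≤ n) (V : Matrix (Fin n) (Fin n) ℝ)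
    (d : Fin l → ℝ) :
    V.submatrix id (Fin.castLE hln) * Matrix.diagonal d * (V.submatrix id (Fin.castLE hln))ᵀ
      = V * Matrix.diagonal (fun i : Fin n => if h : (i : ℕ) < l then d ⟨i.1, h⟩ else 0) * Vᵀ := by
  ext i j
  simp only [mul_apply, transpose_apply, submatrix_apply, id, diagonal_apply,
    Finset.sum_ite_eq, Finset.sum_ite_eq', Finset.mem_univ, if_true, ite_mul, zero_mul,
    mul_ite, mul_zero, Finset.sum_dite_eq, Finset.sum_dite_eq', mul_dite, dite_mul]
  rw [← Finset.sum_subset (Finset.subset_univ (Finset.univ.map (Fin.castLEEmb hln)))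
    (fun x _ hx => ?_), Finset.sum_map]
  · apply Finset.sum_congr rfl
    intro a _
    simp [Fin.castLEEmb, Fin.castLE]
  · have hxl : ¬ (x : ℕ) < l := by
      intro h
      exact hx (Finset.mem_map.mpr ⟨⟨x, h⟩, Finset.mem_univ _, rfl⟩)
    simp [hxl]

private lemma spectrum_conj' {n : ℕ} (V : Matrix (Fin n) (Fin n) ℝ) (hV : Vᵀ * V = 1)
    (f : Fin n → ℝ) :
    spectrum ℝ (V * Matrix.diagonal f * Vᵀ) = Set.range f := by
  have hV' : V * Vᵀ = 1 := mul_eq_one_comm.mp hV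
  let u : (Matrix (Fin n) (Fin n) ℝ)ˣ := ⟨V, Vᵀ, hV', hV⟩
  have h : V * Matrix.diagonal f * Vᵀ
      = (u : Matrix (Fin n) (Fin n) ℝ) * Matrix.diagonal f
        * ((u⁻¹ : _ˣ) : Matrix (Fin n) (Fin n) ℝ) := rfl
  rw [h, spectrum.units_conjugate, spectrum_diagonal]

/-- The optimal preconditioner
`P⋆ = (λ_{ℓ+1}+μ)⁻¹ V_ℓ(Λ_ℓ+μI)V_ℓᵀ + (I − V_ℓV_ℓᵀ)` achieves
`κ₂(P⋆^{-1/2}(A+μI)P⋆^{-1/2}) = (λ_{ℓ+1}+μ)/(λ_n+μ)` (0-indexed: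
`λ_{ℓ+1} = lam ⟨l, _⟩`, `λ_n = lam ⟨n-1, _⟩`). -/
theorem optimal_preconditioner_condition_number {n : ℕ}
    (A : Matrix (Fin n) (Fin n) ℝ) (hA : A.PosSemidef)
    (lam : Fin n → ℝ) (hanti : Antitone lam)
    (V : Matrix (Fin n) (Fin n) ℝ) (hV : Vᵀ * V = 1)
    (hdecomp : A = V * Matrix.diagonal lam * Vᵀ)
    (μ : ℝ) (hμ : 0 ≤ μ)
    (l : ℕ) (hl1 : 1 ≤ l) (hln : l < n)
    (hpos : 0 < lam ⟨n - 1, by omega⟩ + μ)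
    (Pstar : Matrix (Fin n) (Fin n) ℝ)
    (hPstar : Pstar = (lam ⟨l, hln⟩ + μ)⁻¹ •
        (V.submatrix id (Fin.castLE hln.le)
          * (Matrix.diagonal (fun j : Fin l => lam (Fin.castLE hln.le j))
              + μ • (1 : Matrix (Fin l) (Fin l) ℝ))
          * (V.submatrix id (Fin.castLE hln.le))ᵀ)
        + ((1 : Matrix (Fin n) (Fin n) ℝ)
          - V.submatrix id (Fin.castLE hln.le) * (V.submatrix id (Fin.castLE hln.le))ᵀ)) :
    kappa ((matSqrt Pstar)⁻¹ * (A + μ • (1 : Matrix (Fin n) (Fin n) ℝ)) * (matSqrt Pstar)⁻¹)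
      = (lam ⟨l, hln⟩ + μ) / (lam ⟨n - 1, by omega⟩ + μ) := by
  have hn0 : 0 < n := by omega
  haveI : Nonempty (Fin n) := ⟨⟨0, hn0⟩⟩
  set c : ℝ := lam ⟨l, hln⟩ + μ with hc_def
  have hlast : ∀ i : Fin n, lam ⟨n - 1, by omega⟩ ≤ lam i → True := fun _ _ => trivial
  have hlam_pos : ∀ i : Fin n, 0 < lam i + μ := by
    intro i
    refine lt_of_lt_of_le hpos (add_le_add_left (hanti ?_) μ)
    rw [Fin.le_def]
    have := i.2
    simp only []
    omega
  have hc : 0 < c := hlam_pos ⟨l, hln⟩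
  have hVV' : V * Vᵀ = 1 := mul_eq_one_comm.mp hV
  set e : Fin n → ℝ := fun i => if (i : ℕ) < l then c⁻¹ * (lam i + μ) else 1 with he_def
  have he_pos : ∀ i, 0 < e i := by
    intro i
    simp only [he_def]
    split
    · exact mul_pos (inv_pos.mpr hc) (hlam_pos i)
    · exact one_pos
  -- Pstar = V * diagonal e * Vᵀ
  have hDl : (Matrix.diagonal (fun j : Fin l => lam (Fin.castLE hln.le j))
       + μ • (1 : Matrix (Fin l) (Fin l) ℝ))
      = Matrix.diagonal (fun j : Fin l => lam (Fin.castLE hln.le j) + μ) := by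
    ext a b
    by_cases h : a = b <;> simp [Matrix.diagonal_apply, Matrix.one_apply, h]
  have hVl : V.submatrix id (Fin.castLE hln.le) * (V.submatrix id (Fin.castLE hln.le))ᵀ
      = V.submatrix id (Fin.castLE hln.le) * Matrix.diagonal (fun _ : Fin l => (1:ℝ))
        * (V.submatrix id (Fin.castLE hln.le))ᵀ := by
    rw [Matrix.diagonal_one, Matrix.mul_one]
  have hP : Pstar = V * Matrix.diagonal e * Vᵀ := by
    rw [hPstar, hDl, hVl, submatrix_diag_conj, submatrix_diag_conj, ← hVV']
    set G : Fin n → ℝ :=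
      fun i : Fin n => if h : (i : ℕ) < l then lam (Fin.castLE hln.le ⟨i.1, h⟩) + μ else 0
      with hG_def
    have hd : c⁻¹ • Matrix.diagonal G = Matrix.diagonal fun i => c⁻¹ * G i := by
      ext i j
      by_cases h : i = j <;> simp [Matrix.diagonal_apply, h]
    have h1 : c⁻¹ • (V * Matrix.diagonal G * Vᵀ)
        = V * Matrix.diagonal (fun i => c⁻¹ * G i) * Vᵀ := by
      rw [← hd, Matrix.mul_smul, Matrix.smul_mul]
    rw [h1, hVV']
    have h2 : (1 : Matrix (Fin n) (Fin n) ℝ)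
        = V * Matrix.diagonal (fun _ : Fin n => (1:ℝ)) * Vᵀ := by
      rw [Matrix.diagonal_one, Matrix.mul_one, hVV']
    rw [h2, ← Matrix.sub_mul, ← Matrix.mul_sub, ← Matrix.add_mul, ← Matrix.mul_add]
    congr 2
    ext i j
    by_cases h : i = j
    · subst h
      by_cases hil : (i : ℕ) < l
      · have hcast : Fin.castLE hln.le ⟨i.1, hil⟩ = i := by apply Fin.ext; rfl
        simp [Matrix.diagonal_apply, hG_def, he_def, hil, hcast]
      · simp [Matrix.diagonal_apply, hG_def, he_def, hil]
    · simp [Matrix.diagonal_apply, h]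
  -- square root
  set s : Fin n → ℝ := fun i => Real.sqrt (e i) with hs_def
  have hs_pos : ∀ i, 0 < s i := fun i => Real.sqrt_pos.mpr (he_pos i)
  set S : Matrix (Fin n) (Fin n) ℝ := V * Matrix.diagonal s * Vᵀ with hS_def
  have conj_mul : ∀ a b : Fin n → ℝ,
      (V * Matrix.diagonal a * Vᵀ) * (V * Matrix.diagonal b * Vᵀ)
        = V * Matrix.diagonal (fun i => a i * b i) * Vᵀ := by
    intro a b
    have h0 : (V * Matrix.diagonal a * Vᵀ) * (V * Matrix.diagonal b * Vᵀ)
        = V * Matrix.diagonal a * (Vᵀ * V) * (Matrix.diagonal b * Vᵀ) := by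
      simp only [Matrix.mul_assoc]
    rw [h0, hV, Matrix.mul_one, Matrix.mul_assoc, ← Matrix.mul_assoc (Matrix.diagonal a),
      Matrix.diagonal_mul_diagonal, ← Matrix.mul_assoc]
  have herm : ∀ a : Fin n → ℝ, (V * Matrix.diagonal a * Vᵀ).IsHermitian := by
    intro a
    unfold Matrix.IsHermitian
    simp [Matrix.conjTranspose_mul, Matrix.mul_assoc]
  have hpsd : ∀ a : Fin n → ℝ, (∀ i, 0 ≤ a i) → (V * Matrix.diagonal a * Vᵀ).PosSemidef := by
    intro a ha
    have h1 : (Matrix.diagonal a).PosSemidef := Matrix.posSemidef_diagonal_iff.mpr ha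
    have h2 := h1.mul_mul_conjTranspose_same V
    simpa using h2
  have hS_psd : S.PosSemidef := hpsd s (fun i => (hs_pos i).le)
  have hP_psd : Pstar.PosSemidef := by
    rw [hP]; exact hpsd e (fun i => (he_pos i).le)
  have hS_sq : S ^ 2 = Pstar := by
    have hse : (fun i => s i * s i) = e := funext fun i => Real.mul_self_sqrt (he_pos i).le
    rw [pow_two, hS_def, conj_mul, hse, hP]
  have hsqrt : matSqrt Pstar = S := by
    rw [matSqrt, dif_pos hP_psd]
    have hSa : IsSelfAdjoint S := herm s
    have h1 : hP_psd.1.cfc Real.sqrt = S := by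
      rw [← hP_psd.1.cfc_eq, ← hS_sq, ← cfc_comp_pow Real.sqrt 2 S (by fun_prop) hSa]
      rw [cfc_congr (g := fun x => x), cfc_id' ℝ S hSa]
      intro x hx
      rw [hS_def, spectrum_conj' V hV s] at hx
      obtain ⟨i, rfl⟩ := hx
      exact Real.sqrt_sq (hs_pos i).le
    exact h1
  have hSinv : S⁻¹ = V * Matrix.diagonal (fun i => (s i)⁻¹) * Vᵀ := by
    apply Matrix.inv_eq_right_inv
    rw [hS_def, conj_mul]
    have h1 : (fun i => s i * (s i)⁻¹) = fun _ : Fin n => (1:ℝ) :=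
      funext fun i => mul_inv_cancel₀ (hs_pos i).ne'
    rw [h1, Matrix.diagonal_one, Matrix.mul_one, hVV']
  -- A + μI
  have hmu1 : μ • (1 : Matrix (Fin n) (Fin n) ℝ)
      = V * Matrix.diagonal (fun _ : Fin n => μ) * Vᵀ := by
    have hd : (Matrix.diagonal (fun _ : Fin n => μ))
        = μ • (1 : Matrix (Fin n) (Fin n) ℝ) := by
      ext i j
      by_cases h : i = j <;> simp [Matrix.diagonal_apply, Matrix.one_apply, h]
    rw [hd, Matrix.mul_smul, Matrix.mul_one, Matrix.smul_mul, hVV']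
  have hAmu : A + μ • (1 : Matrix (Fin n) (Fin n) ℝ)
      = V * Matrix.diagonal (fun i => lam i + μ) * Vᵀ := by
    rw [hdecomp, hmu1, ← Matrix.add_mul, ← Matrix.mul_add, ← Matrix.diagonal_add]
  set f : Fin n → ℝ := fun i => if (i : ℕ) < l then c else lam i + μ with hf_def
  have hM : (matSqrt Pstar)⁻¹ * (A + μ • (1 : Matrix (Fin n) (Fin n) ℝ)) * (matSqrt Pstar)⁻¹
      = V * Matrix.diagonal f * Vᵀ := by
    have hfe : (fun i => (s i)⁻¹ * (lam i + μ) * (s i)⁻¹) = f := by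
      funext i
      have hsi : s i * s i = e i := Real.mul_self_sqrt (he_pos i).le
      have key : (s i)⁻¹ * (lam i + μ) * (s i)⁻¹ = (lam i + μ) * (s i * s i)⁻¹ := by
        rw [mul_inv]; ring
      rw [key, hsi]
      by_cases h : (i : ℕ) < l
      · have he : e i = c⁻¹ * (lam i + μ) := by simp [he_def, h]
        rw [he, hf_def]
        simp only [h, if_pos]
        have h1 : lam i + μ ≠ 0 := (hlam_pos i).ne'
        have h2 : c ≠ 0 := hc.ne'
        field_simp
      · have he : e i = 1 := by simp [he_def, h]
        rw [he, hf_def]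
        simp [h]
    rw [hsqrt, hSinv, hAmu, conj_mul, conj_mul]
    rw [show (fun i => (s i)⁻¹ * (lam i + μ) * (s i)⁻¹) = f from hfe]
  have hHerm : ((matSqrt Pstar)⁻¹ * (A + μ • (1 : Matrix (Fin n) (Fin n) ℝ))
      * (matSqrt Pstar)⁻¹).IsHermitian := hM ▸ herm f
  simp only [kappa]
  rw [dif_pos hHerm]
  have hrange : Set.range hHerm.eigenvalues = Set.range f := by
    calc Set.range hHerm.eigenvalues
        = spectrum ℝ ((matSqrt Pstar)⁻¹ * (A + μ • (1 : Matrix (Fin n) (Fin n) ℝ))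
            * (matSqrt Pstar)⁻¹) :=
          (Matrix.IsHermitian.spectrum_real_eq_range_eigenvalues hHerm).symm
      _ = Set.range f := by rw [hM]; exact spectrum_conj' V hV f
  set d : Fin n → ℝ := hHerm.eigenvalues with hd_def
  have hbddA : BddAbove (Set.range d) := (Set.finite_range d).bddAbove
  have hbddB : BddBelow (Set.range d) := (Set.finite_range d).bddBelow
  have hfub : ∀ j, f j ≤ c := by
    intro j
    rw [hf_def]
    by_cases h : (j : ℕ) < l
    · simp [h]
    · simp only [h, if_neg, not_false_iff]
      exact add_le_add_left (hanti (by rw [Fin.le_def]; simpa using not_lt.mp h)) μ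
  have hflb : ∀ j, lam ⟨n - 1, by omega⟩ + μ ≤ f j := by
    intro j
    rw [hf_def]
    by_cases h : (j : ℕ) < l
    · simp only [h, if_pos]
      exact add_le_add_left (hanti (by rw [Fin.le_def]; simp; omega)) μ
    · simp only [h, if_neg, not_false_iff]
      refine add_le_add_left (hanti ?_) μ
      rw [Fin.le_def]
      have := j.2
      simp only []
      omega
  have hsup : (⨆ i, d i) = c := by
    apply le_antisymm
    · apply ciSup_le
      intro i
      have hmem : d i ∈ Set.range f := hrange ▸ Set.mem_range_self i
      obtain ⟨j, hj⟩ := hmem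
      exact hj ▸ hfub j
    · have hc_mem : c ∈ Set.range d := by
        rw [hrange]
        exact ⟨⟨l, hln⟩, by simp [hf_def, hc_def]⟩
      obtain ⟨i, hi⟩ := hc_mem
      rw [← hi]
      exact le_ciSup hbddA i
  have hinf : (⨅ i, d i) = lam ⟨n - 1, by omega⟩ + μ := by
    apply le_antisymm
    · have hmem : lam ⟨n - 1, by omega⟩ + μ ∈ Set.range d := by
        rw [hrange]
        refine ⟨⟨n - 1, by omega⟩, ?_⟩
        rw [hf_def]
        simp only []
        rw [if_neg (by omega)]
      obtain ⟨i, hi⟩ := hmem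
      rw [← hi]
      exact ciInf_le hbddB i
    · apply le_ciInf
      intro i
      have hmem : d i ∈ Set.range f := hrange ▸ Set.mem_range_self i
      obtain ⟨j, hj⟩ := hmem
      exact hj ▸ hflb j
  rw [hsup, hinf]
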